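/- arXiv:1501.02512 — 5 statements merged into one kernel-verified Lean document; each statement's English description precedes it below -/
import Mathlib

section
/- Let M be a topological space equipped with a family of finitary operations (g_i)_{i ∈ I}, where g_i : M^{k_i} → M, and assume every g_i is continuous (with respect to the product topology on M^{k_i}). Let N be a topological space, let n ≥ 1, let r be a closed subset of N^n, and let ω_1, …, ω_n : M → N be continuous maps. Suppose s ⊆ M^n is a subuniverse of M^n (i.e., s is closed under coordinatewise application of each g_i), s is contained in the preimage (ω_1,…,ω_n)^{-1}(r) := {(a_1,…,a_n) ∈ M^n : (ω_1(a_1),…,ω_n(a_n)) ∈ r}, and s is maximal among subuniverses of M^n contained in this preimage (every subuniverse s' with s ⊆ s' ⊆ (ω_1,…,ω_n)^{-1}(r) equals s). Then s is a topologically closed subset of M^n (with the product topology). -/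
open Set

theorem Set.MapsTo.closure_univ_pi {ι X : Type*} [TopologicalSpace X] {F : (ι → X) → X}
    {s : Set X} (h : MapsTo F (univ.pi fun _ => s) s) (hF : Continuous F) :
    MapsTo F (univ.pi fun _ => closure s) (closure s) := by
  simpa only [closure_pi_set] using h.closure hF

theorem continuous_coordinatewise {κ ι M : Type*} [TopologicalSpace M] {f : (κ → M) → M}
    (hf : Continuous f) : Continuous fun (t : κ → ι → M) (m : ι) => f fun j => t j m := by
  fun_prop

theorem closed_maximal_relations_general
    {M N : Type*} [TopologicalSpace M] [TopologicalSpace N]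
    {I : Type*} {k : I → ℕ} (g : ∀ i, (Fin (k i) → M) → M)
    (hg : ∀ i, Continuous (g i))
    {n : ℕ} (r : Set (Fin n → N)) (hr : IsClosed r)
    (ω : Fin n → M → N) (hω : ∀ j, Continuous (ω j))
    (s : Set (Fin n → M))
    (hs_sub : ∀ i (t : Fin (k i) → (Fin n → M)), (∀ j, t j ∈ s) →
      (fun m => g i (fun j => t j m)) ∈ s)
    (hs_pre : ∀ a ∈ s, (fun j => ω j (a j)) ∈ r)
    (hs_max : ∀ s' : Set (Fin n → M),
      (∀ i (t : Fin (k i) → (Fin n → M)), (∀ j, t j ∈ s') →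
        (fun m => g i (fun j => t j m)) ∈ s') →
      s ⊆ s' → (∀ a ∈ s', (fun j => ω j (a j)) ∈ r) → s' = s) :
    IsClosed s := by
  have hclosure_sub : ∀ i (t : Fin (k i) → (Fin n → M)), (∀ j, t j ∈ closure s) →
      (fun m => g i (fun j => t j m)) ∈ closure s := fun i t ht =>
    MapsTo.closure_univ_pi (fun t ht => hs_sub i t fun j => ht j (mem_univ j))
      (continuous_coordinatewise (hg i)) fun j _ => ht j
  have hpre_closed : IsClosed {a : Fin n → M | (fun j => ω j (a j)) ∈ r} :=
    hr.preimage (continuous_pi fun j => (hω j).comp (continuous_apply j))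
  have hclosure_pre : ∀ a ∈ closure s, (fun j => ω j (a j)) ∈ r := fun _ ha =>
    closure_minimal hs_pre hpre_closed ha
  exact closure_eq_iff_isClosed.mp (hs_max _ hclosure_sub subset_closure hclosure_pre)

/-- **Closed Maximal Relations Lemma** (Lemma 2.1).
If `M` is a topological space with continuous finitary operations `g i`,
`r` is a closed subset of `N^n`, the maps `ω j : M → N` are continuous, and
`s` is a subuniverse of `M^n` contained in `(ω₁,…,ωₙ)⁻¹(r)` and maximal among
such subuniverses, then `s` is topologically closed. -/
theorem closed_maximal_relations
    {M N : Type*} [TopologicalSpace M] [TopologicalSpace N]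
    {I : Type*} {k : I → ℕ} (g : ∀ i, (Fin (k i) → M) → M)
    (hg : ∀ i, Continuous (g i))
    {n : ℕ} (hn : 1 ≤ n) (r : Set (Fin n → N)) (hr : IsClosed r)
    (ω : Fin n → M → N) (hω : ∀ j, Continuous (ω j))
    (s : Set (Fin n → M))
    (hs_sub : ∀ i (t : Fin (k i) → (Fin n → M)), (∀ j, t j ∈ s) →
      (fun m => g i (fun j => t j m)) ∈ s)
    (hs_pre : ∀ a ∈ s, (fun j => ω j (a j)) ∈ r)
    (hs_max : ∀ s' : Set (Fin n → M),
      (∀ i (t : Fin (k i) → (Fin n → M)), (∀ j, t j ∈ s') →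
        (fun m => g i (fun j => t j m)) ∈ s') →
      s ⊆ s' → (∀ a ∈ s', (fun j => ω j (a j)) ∈ r) → s' = s) :
    IsClosed s :=
  closed_maximal_relations_general g hg r hr ω hω s hs_sub hs_pre hs_max
end

section
/- Let A, M, N be types. Let X be a set of functions from A to M and let E be a set of functions from M to M such that g ∘ x ∈ X whenever g ∈ E and x ∈ X. Let α, β : X → M be functions satisfying α(g ∘ x) = g(α(x)) and β(g ∘ x) = g(β(x)) for all g ∈ E and x ∈ X. Let Ω be a set of functions from M to N, let Z := {ω ∘ x : ω ∈ Ω, x ∈ X} (a set of functions from A to N), and suppose there exist functions d_α, d_β : Z → N satisfying d_α(ω ∘ x) = ω(α(x)) and d_β(ω ∘ x) = ω(β(x)) for all ω ∈ Ω and x ∈ X. If the family {ω ∘ g : ω ∈ Ω, g ∈ E} separates the points of M (for all m ≠ m' in M there exist ω ∈ Ω, g ∈ E with ω(g(m)) ≠ ω(g(m'))) and α ≠ β, then d_α ≠ d_β. -/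
/-- Commuting Triangle Lemma, part (1) (Lemma 6.1(D)(1)): if `Ω ∘ E` separates the
points of `M` then the assignment `α ↦ d_α` is one-to-one. -/
theorem commuting_triangle_injective
    {A M N : Type*} (X : Set (A → M)) (E : Set (M → M))
    (hXE : ∀ g ∈ E, ∀ x ∈ X, g ∘ x ∈ X)
    (α β : X → M)
    (hα : ∀ g (hg : g ∈ E) x (hx : x ∈ X), α ⟨g ∘ x, hXE g hg x hx⟩ = g (α ⟨x, hx⟩))
    (hβ : ∀ g (hg : g ∈ E) x (hx : x ∈ X), β ⟨g ∘ x, hXE g hg x hx⟩ = g (β ⟨x, hx⟩))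
    (Ω : Set (M → N))
    (dα dβ : {f : A → N // ∃ ω ∈ Ω, ∃ x ∈ X, f = ω ∘ x} → N)
    (hdα : ∀ ω (hω : ω ∈ Ω) x (hx : x ∈ X),
      dα ⟨ω ∘ x, ω, hω, x, hx, rfl⟩ = ω (α ⟨x, hx⟩))
    (hdβ : ∀ ω (hω : ω ∈ Ω) x (hx : x ∈ X),
      dβ ⟨ω ∘ x, ω, hω, x, hx, rfl⟩ = ω (β ⟨x, hx⟩))
    (hsep : ∀ m m' : M, m ≠ m' → ∃ ω ∈ Ω, ∃ g ∈ E, ω (g m) ≠ ω (g m'))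
    (hαβ : α ≠ β) :
    dα ≠ dβ := by
  intro hd
  refine hαβ (funext fun ⟨x, hx⟩ => ?_)
  by_contra hne
  obtain ⟨ω, hω, g, hg, hωg⟩ := hsep _ _ hne
  have hgx := hXE g hg x hx
  apply hωg
  calc ω (g (α ⟨x, hx⟩))
      = ω (α ⟨g ∘ x, hgx⟩) := by rw [hα g hg x hx]
    _ = dα ⟨ω ∘ (g ∘ x), ω, hω, g ∘ x, hgx, rfl⟩ := (hdα ω hω _ hgx).symm
    _ = dβ ⟨ω ∘ (g ∘ x), ω, hω, g ∘ x, hgx, rfl⟩ := by rw [hd]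
    _ = ω (β ⟨g ∘ x, hgx⟩) := hdβ ω hω _ hgx
    _ = ω (g (β ⟨x, hx⟩)) := by rw [hβ g hg x hx]
end

section
/- Let M be a type equipped with a family of finitary operations (g_i)_{i ∈ I} with g_i : M^{k_i} → M; call a subset of M × M a subuniverse of M² if it is closed under coordinatewise application of each g_i. Let N be a type, let ⊑ be a reflexive and antisymmetric binary relation on N, and let ω_1, ω_2 : M → N. Define P_Δ := {(a, b) : ω_1(a) = ω_2(b)}, P_⊑ := {(a, b) : ω_1(a) ⊑ ω_2(b)}, and P_⊒ := {(a, b) : ω_2(b) ⊑ ω_1(a)}. Suppose s is a subuniverse of M² contained in P_Δ and maximal among subuniverses contained in P_Δ, and suppose t_1, t_2 are subuniverses of M² with s ⊆ t_1 ⊆ P_⊑ and s ⊆ t_2 ⊆ P_⊒. Then s = t_1 ∩ t_2. -/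
def IsSubuniverseSq {M I : Type*} {k : I → ℕ} (g : ∀ i, (Fin (k i) → M) → M)
    (s : Set (M × M)) : Prop :=
  ∀ i (t : Fin (k i) → M × M), (∀ j, t j ∈ s) →
    (g i (fun j => (t j).1), g i (fun j => (t j).2)) ∈ s

theorem IsSubuniverseSq.inter {M I : Type*} {k : I → ℕ} {g : ∀ i, (Fin (k i) → M) → M}
    {s t : Set (M × M)} (hs : IsSubuniverseSq g s) (ht : IsSubuniverseSq g t) :
    IsSubuniverseSq g (s ∩ t) :=
  fun i u hu => ⟨hs i u fun j => (hu j).1, ht i u fun j => (hu j).2⟩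

theorem inter_subset_setOf_eq_of_antisymm {M N : Type*} {r : N → N → Prop}
    (hanti : ∀ x y, r x y → r y x → x = y) {ω₁ ω₂ : M → N} {t₁ t₂ : Set (M × M)}
    (ht₁ : t₁ ⊆ {p | r (ω₁ p.1) (ω₂ p.2)}) (ht₂ : t₂ ⊆ {p | r (ω₂ p.2) (ω₁ p.1)}) :
    t₁ ∩ t₂ ⊆ {p | ω₁ p.1 = ω₂ p.2} :=
  fun _ hp => hanti _ _ (ht₁ hp.1) (ht₂ hp.2)

theorem sqsubseteq_lemma_general
    {M N : Type*} {I : Type*} {k : I → ℕ} (g : ∀ i, (Fin (k i) → M) → M)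
    (sqle : N → N → Prop)
    (hanti : ∀ x y, sqle x y → sqle y x → x = y)
    (ω₁ ω₂ : M → N)
    (s t₁ t₂ : Set (M × M))
    (hs_max : ∀ s' : Set (M × M),
      (∀ i (t : Fin (k i) → M × M), (∀ j, t j ∈ s') →
        (g i (fun j => (t j).1), g i (fun j => (t j).2)) ∈ s') →
      s ⊆ s' → s' ⊆ {p : M × M | ω₁ p.1 = ω₂ p.2} → s' = s)
    (ht₁_sub : ∀ i (t : Fin (k i) → M × M), (∀ j, t j ∈ t₁) →
      (g i (fun j => (t j).1), g i (fun j => (t j).2)) ∈ t₁)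
    (hst₁ : s ⊆ t₁) (ht₁ : t₁ ⊆ {p : M × M | sqle (ω₁ p.1) (ω₂ p.2)})
    (ht₂_sub : ∀ i (t : Fin (k i) → M × M), (∀ j, t j ∈ t₂) →
      (g i (fun j => (t j).1), g i (fun j => (t j).2)) ∈ t₂)
    (hst₂ : s ⊆ t₂) (ht₂ : t₂ ⊆ {p : M × M | sqle (ω₂ p.2) (ω₁ p.1)}) :
    s = t₁ ∩ t₂ :=
  (hs_max (t₁ ∩ t₂) (IsSubuniverseSq.inter ht₁_sub ht₂_sub) (Set.subset_inter hst₁ hst₂)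
    (inter_subset_setOf_eq_of_antisymm hanti ht₁ ht₂)).symm

/-- Combinatorial core of the ⊑-Lemma (Lemma 6.3): a subuniverse `s` of `M²` maximal
in `(ω₁, ω₂)⁻¹(Δ_N)` is the intersection of subuniverses `t₁ ⊆ (ω₁, ω₂)⁻¹(⊑)` and
`t₂ ⊆ (ω₁, ω₂)⁻¹(⊒)` containing it. -/
theorem sqsubseteq_lemma
    {M N : Type*} {I : Type*} {k : I → ℕ} (g : ∀ i, (Fin (k i) → M) → M)
    (sqle : N → N → Prop)
    (hrefl : ∀ x, sqle x x)
    (hanti : ∀ x y, sqle x y → sqle y x → x = y)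
    (ω₁ ω₂ : M → N)
    (s t₁ t₂ : Set (M × M))
    (hs_sub : ∀ i (t : Fin (k i) → M × M), (∀ j, t j ∈ s) →
      (g i (fun j => (t j).1), g i (fun j => (t j).2)) ∈ s)
    (hsΔ : s ⊆ {p : M × M | ω₁ p.1 = ω₂ p.2})
    (hs_max : ∀ s' : Set (M × M),
      (∀ i (t : Fin (k i) → M × M), (∀ j, t j ∈ s') →
        (g i (fun j => (t j).1), g i (fun j => (t j).2)) ∈ s') →
      s ⊆ s' → s' ⊆ {p : M × M | ω₁ p.1 = ω₂ p.2} → s' = s)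
    (ht₁_sub : ∀ i (t : Fin (k i) → M × M), (∀ j, t j ∈ t₁) →
      (g i (fun j => (t j).1), g i (fun j => (t j).2)) ∈ t₁)
    (hst₁ : s ⊆ t₁) (ht₁ : t₁ ⊆ {p : M × M | sqle (ω₁ p.1) (ω₂ p.2)})
    (ht₂_sub : ∀ i (t : Fin (k i) → M × M), (∀ j, t j ∈ t₂) →
      (g i (fun j => (t j).1), g i (fun j => (t j).2)) ∈ t₂)
    (hst₂ : s ⊆ t₂) (ht₂ : t₂ ⊆ {p : M × M | sqle (ω₂ p.2) (ω₁ p.1)}) :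
    s = t₁ ∩ t₂ :=
  sqsubseteq_lemma_general g sqle hanti ω₁ ω₂ s t₁ t₂ hs_max ht₁_sub hst₁ ht₁ ht₂_sub hst₂ ht₂
end

section
/- Let M := ℕ → Bool and define the alternating order ≼ on M by: a ≼ b iff for every even n, a n ≤ b n, and for every odd n, b n ≤ a n (with false < true). Then the set {(a, b) ∈ M × M : a ≼ b} is closed under the coordinatewise Ockham algebra operations: if a ≼ b and c ≼ d then a ⊔ c ≼ b ⊔ d and a ⊓ c ≼ b ⊓ d; if a ≼ b then ¬a ≼ ¬b; and ⊥ ≼ ⊥ and ⊤ ≼ ⊤. That is, ≼ forms a subalgebra of M₁². -/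
/-!
Each Ockham operation on `M₁` acts coordinatewise, up to the shift in `¬`. The pointwise joins
and meets are monotone in each argument, so they respect the coordinatewise order in every
position and hence the alternating order. Negation complements, which reverses the order, but it
also shifts by one, which swaps even and odd positions; the two reversals cancel.
-/

/-- The underlying set `{0,1}^{ℕ₀}`. -/
abbrev OckM : Type := ℕ → Bool

/-- Pointwise join. -/
def ockJoin (a b : OckM) : OckM := fun n => a n || b n

/-- Pointwise meet. -/
def ockMeet (a b : OckM) : OckM := fun n => a n && b n

/-- The bottom element. -/
def ockBot : OckM := fun _ => false

/-- The top element. -/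
def ockTop : OckM := fun _ => true

/-- Negation: shift left, then complement. -/
def ockNeg (a : OckM) : OckM := fun n => !(a (n + 1))

/-- The alternating order `≼` on `{0,1}^{ℕ₀}`. -/
def altLe (a b : OckM) : Prop :=
  ∀ n : ℕ, (Even n → a n ≤ b n) ∧ (Odd n → b n ≤ a n)

theorem altLe_refl (a : OckM) : altLe a a :=
  fun _ => ⟨fun _ => le_rfl, fun _ => le_rfl⟩

theorem altLe_map₂ {f : Bool → Bool → Bool}
    (hf : ∀ ⦃x x' y y'⦄, x ≤ x' → y ≤ y' → f x y ≤ f x' y') {a b c d : OckM}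
    (hab : altLe a b) (hcd : altLe c d) :
    altLe (fun n => f (a n) (c n)) (fun n => f (b n) (d n)) :=
  fun n => ⟨fun he => hf ((hab n).1 he) ((hcd n).1 he),
    fun ho => hf ((hab n).2 ho) ((hcd n).2 ho)⟩

theorem altLe_ockJoin {a b c d : OckM} (hab : altLe a b) (hcd : altLe c d) :
    altLe (ockJoin a c) (ockJoin b d) :=
  altLe_map₂ (fun _ _ _ _ => sup_le_sup) hab hcd

theorem altLe_ockMeet {a b c d : OckM} (hab : altLe a b) (hcd : altLe c d) :
    altLe (ockMeet a c) (ockMeet b d) :=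
  altLe_map₂ (fun _ _ _ _ => inf_le_inf) hab hcd

theorem altLe_ockNeg {a b : OckM} (hab : altLe a b) : altLe (ockNeg a) (ockNeg b) :=
  fun n => ⟨fun he => compl_le_compl ((hab (n + 1)).2 he.add_one),
    fun ho => compl_le_compl ((hab (n + 1)).1 ho.add_one)⟩

/-- The alternating order `≼` forms a subalgebra of `M₁²` (Section 4 of the paper). -/
theorem altLe_subalgebra :
    (∀ a b c d : OckM, altLe a b → altLe c d → altLe (ockJoin a c) (ockJoin b d)) ∧
    (∀ a b c d : OckM, altLe a b → altLe c d → altLe (ockMeet a c) (ockMeet b d)) ∧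
    (∀ a b : OckM, altLe a b → altLe (ockNeg a) (ockNeg b)) ∧
    altLe ockBot ockBot ∧
    altLe ockTop ockTop :=
  ⟨fun _ _ _ _ => altLe_ockJoin, fun _ _ _ _ => altLe_ockMeet, fun _ _ => altLe_ockNeg,
    altLe_refl _, altLe_refl _⟩
end

section
/- Let M := ℕ → Bool, define negation ¬ : M → M by (¬a) n := !(a (n+1)), and define the alternating order ≼ on M by: a ≼ b iff for every even n, a n ≤ b n, and for every odd n, b n ≤ a n (with false < true). If a, b ∈ M and a ⋠ b (it is not the case that a ≼ b), then there exists n ∈ ℕ such that (¬^[n] a) 0 = true and (¬^[n] b) 0 = false, where ¬^[n] denotes the n-fold iterate of ¬. -/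
/-!
Coordinate `k` of `¬^[n] a` is coordinate `n + k` of `a` complemented `n` times, so
`(¬^[n] a) 0 = (!·)^[n] (a n)`. Complementation reverses the order of `Bool`, hence `a ≼ b` says
exactly that `(!·)^[n] (a n) ≤ (!·)^[n] (b n)` for every `n`; where this fails, the two values
are `true` and `false`.
-/

lemma Bool.not_le_not {x y : Bool} : (!x) ≤ (!y) ↔ y ≤ x := by
  revert x y; decide

lemma ockNeg_iterate_apply (n : ℕ) (a : OckM) (k : ℕ) :
    (ockNeg^[n] a) k = (!·)^[n] (a (n + k)) := by
  induction n generalizing a with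
  | zero => simp
  | succ n ih =>
    rw [Function.iterate_succ_apply, ih, Function.iterate_succ_apply, ockNeg,
      Nat.add_right_comm]

lemma altLe_iff_forall_not_iterate_le (a b : OckM) :
    altLe a b ↔ ∀ n : ℕ, (!·)^[n] (a n) ≤ (!·)^[n] (b n) := by
  refine forall_congr' fun n => ?_
  rcases Nat.even_or_odd n with hn | hn
  · simp [hn, Nat.not_odd_iff_even.mpr hn, Bool.involutive_not.iterate_even hn]
  · simp [hn, Nat.not_even_iff_odd.mpr hn, Bool.involutive_not.iterate_odd hn, Bool.not_le_not]

/-- If `a ⋠ b` then some iterate of `¬` separates `a` from `b` at coordinate `0`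
(Section 4 of the paper: `π₀ ∘ Clo₁(M₁)` separates the structure `M₂^♭`). -/
theorem neg_iterates_separate :
    ∀ a b : OckM, ¬ altLe a b →
      ∃ n : ℕ, (ockNeg^[n] a) 0 = true ∧ (ockNeg^[n] b) 0 = false := by
  intro a b h
  obtain ⟨n, hn⟩ := not_forall.mp (mt (altLe_iff_forall_not_iterate_le a b).mpr h)
  refine ⟨n, ?_⟩
  simp only [ockNeg_iterate_apply, Nat.add_zero]
  exact (Bool.lt_iff.mp (not_le.mp hn)).symm
end
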